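/- arXiv:1809.03717 — 5 statements merged into one kernel-verified Lean document; each statement's English description precedes it below -/
import Mathlib

section
/- Let X and Y be compact metrizable spaces, T : X → X and S : Y → Y homeomorphisms, and φ : X → Y a continuous surjection with φ ∘ T = S ∘ φ. If X is countable and y ∈ Y is uniformly recurrent under S, then there exists x ∈ φ⁻¹(y) and k ≥ 1 with T^k(x) = x. -/
/-- The orbit closure of a point under a homeomorphism. -/
def orbitClosure {Y : Type*} [TopologicalSpace Y] (S : Y ≃ₜ Y) (y : Y) : Set Y :=
  closure (Set.range fun n : ℤ => (S.toEquiv ^ n) y)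

/-- `C` is a minimal subsystem for `S`. -/
def IsMinimalOn {Y : Type*} [TopologicalSpace Y] (S : Y ≃ₜ Y) (C : Set Y) : Prop :=
  C.Nonempty ∧ IsClosed C ∧ (⇑S) '' C ⊆ C ∧
    ∀ V : Set Y, V ⊆ C → V.Nonempty → IsClosed V → (⇑S) '' V ⊆ V → V = C

/-! The preimage of the orbit closure of `y` is a nonempty closed `T`-invariant set, so by
compactness it contains a minimal subsystem `U`. A countable compact Hausdorff space is Baire, so
`U` has an isolated point; that point lies in the closure of its own forward orbit, hence on it, so
it is periodic, and by minimality every point of `U` is periodic with the same period. Finally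
`φ '' U` is a closed invariant subset of the minimal set `orbitClosure S y`, so it contains `y`. -/

open Function Set Filter Topology

theorem mem_orbitClosure_self {X : Type*} [TopologicalSpace X] (T : X ≃ₜ X) (x : X) :
    x ∈ orbitClosure T x :=
  subset_closure ⟨0, rfl⟩

section MinimalSubsystems

variable {X : Type*} [TopologicalSpace X] {T : X ≃ₜ X} {U : Set X} {x : X}

/-- Zorn's lemma: chains of nonempty closed invariant sets have nonempty intersections by
compactness. -/
theorem IsClosed.exists_isMinimalOn_subset [CompactSpace X] {K : Set X}
    (hK : IsClosed K) (hne : K.Nonempty) (hinv : T '' K ⊆ K) :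
    ∃ U ⊆ K, IsMinimalOn T U := by
  let 𝒮 : Set (Set X) := {V | V.Nonempty ∧ IsClosed V ∧ T '' V ⊆ V}
  have chain_bound : ∀ c ⊆ 𝒮, IsChain (· ⊆ ·) c → c.Nonempty → ∃ lb ∈ 𝒮, ∀ s ∈ c, lb ⊆ s := by
    intro c hc hchain hcne
    have : Nonempty c := hcne.to_subtype
    refine ⟨⋂₀ c, ⟨?_, isClosed_sInter fun s hs ↦ (hc hs).2.1, ?_⟩,
      fun s hs ↦ sInter_subset_of_mem hs⟩
    · exact IsCompact.nonempty_sInter_of_directed_nonempty_isCompact_isClosed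
        (fun s hs t ht ↦ (hchain.total hs ht).elim (fun h ↦ ⟨s, hs, subset_rfl, h⟩)
          (fun h ↦ ⟨t, ht, h, subset_rfl⟩))
        (fun s hs ↦ (hc hs).1) (fun s hs ↦ (hc hs).2.1.isCompact) (fun s hs ↦ (hc hs).2.1)
    · rintro _ ⟨z, hz, rfl⟩ s hs
      exact (hc hs).2.2 ⟨z, hz s hs, rfl⟩
  obtain ⟨U, hUK, hU⟩ := zorn_superset_nonempty 𝒮 chain_bound K ⟨hne, hK, hinv⟩
  obtain ⟨hUne, hUcl, hUinv⟩ := hU.prop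
  exact ⟨U, hUK, hUne, hUcl, hUinv, fun V hVU hVne hVcl hVinv ↦
    hVU.antisymm (hU.2 ⟨hVne, hVcl, hVinv⟩ hVU)⟩

theorem IsMinimalOn.closure_range_iterate_succ (hU : IsMinimalOn T U) (hx : x ∈ U) :
    closure (range fun n : ℕ ↦ T^[n + 1] x) = U := by
  obtain ⟨-, hUcl, hUinv, hUmin⟩ := hU
  set O := range fun n : ℕ ↦ T^[n + 1] x
  have hOU : O ⊆ U := by
    rintro _ ⟨n, rfl⟩
    exact (mapsTo_iff_image_subset.2 hUinv).iterate (n + 1) hx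
  have hOinv : T '' O ⊆ O := by
    rintro _ ⟨_, ⟨n, rfl⟩, rfl⟩
    exact ⟨n + 1, iterate_succ_apply' T (n + 1) x⟩
  refine hUmin _ (closure_minimal hOU hUcl) ⟨_, subset_closure ⟨0, rfl⟩⟩ isClosed_closure ?_
  calc T '' closure O ⊆ closure (T '' O) := image_closure_subset_closure_image T.continuous
    _ ⊆ closure O := closure_mono hOinv

theorem IsMinimalOn.exists_isPeriodicPt (hU : IsMinimalOn T U) (hx : x ∈ U)
    (hiso : 𝓝[U] x = pure x) : ∃ k, 0 < k ∧ IsPeriodicPt T k x := by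
  have hOU : (range fun n : ℕ ↦ T^[n + 1] x) ⊆ U :=
    hU.closure_range_iterate_succ hx ▸ subset_closure
  have hclust := mem_closure_iff_nhdsWithin_neBot.1 (hU.closure_range_iterate_succ hx ▸ hx)
  have hxO : x ∈ range fun n : ℕ ↦ T^[n + 1] x := by
    rw [← mem_pure, ← hclust.le_pure_iff.1 (hiso ▸ nhdsWithin_mono x hOU)]
    exact self_mem_nhdsWithin
  obtain ⟨n, hn⟩ := hxO
  exact ⟨n + 1, n.succ_pos, hn⟩

theorem IsMinimalOn.isPeriodicPt_of_mem [T2Space X] (hU : IsMinimalOn T U) {k : ℕ} (hx : x ∈ U)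
    (hper : IsPeriodicPt T k x) {z : X} (hz : z ∈ U) : IsPeriodicPt T k z := by
  obtain ⟨-, hUcl, hUinv, hUmin⟩ := hU
  let P := {z ∈ U | IsPeriodicPt T k z}
  have hPU : P = U := hUmin P (sep_subset U _) ⟨x, hx, hper⟩
    (hUcl.inter (isClosed_eq (T.continuous.iterate k) continuous_id))
    (by rintro _ ⟨z, hz, rfl⟩; exact ⟨hUinv ⟨z, hz.1, rfl⟩, hz.2.apply⟩)
  exact (hPU ▸ hz : z ∈ P).2

end MinimalSubsystems

/-- Baire: a countable compact Hausdorff space is the countable union of its points. -/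
theorem IsClosed.exists_nhdsWithin_eq_pure_of_countable {X : Type*} [TopologicalSpace X]
    [T2Space X] [CompactSpace X] [Countable X] {U : Set X} (hU : IsClosed U) (hne : U.Nonempty) :
    ∃ x ∈ U, 𝓝[U] x = pure x := by
  have : CompactSpace U := isCompact_iff_compactSpace.1 hU.isCompact
  have : Nonempty U := hne.to_subtype
  obtain ⟨x, hx⟩ := nonempty_interior_of_iUnion_of_closed (fun _ ↦ isClosed_singleton)
    (iUnion_of_singleton U)
  have hxopen : IsOpen {x} :=
    interior_eq_iff_isOpen.1 (hx.subset_singleton_iff.1 interior_subset)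
  refine ⟨x, x.2, ?_⟩
  rw [nhdsWithin_eq_map_subtype_coe x.2, (isOpen_singleton_iff_nhds_eq_pure x).1 hxopen, map_pure]

/-- If the cover `X` is countable, a uniformly recurrent point has a periodic preimage. -/
theorem stmt_4 {X Y : Type*} [TopologicalSpace X] [CompactSpace X]
    [TopologicalSpace.MetrizableSpace X] [TopologicalSpace Y] [CompactSpace Y]
    [TopologicalSpace.MetrizableSpace Y]
    (T : X ≃ₜ X) (S : Y ≃ₜ Y) (φ : X → Y) (hφc : Continuous φ)
    (hφs : Function.Surjective φ) (hcomm : ∀ x : X, φ (T x) = S (φ x))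
    (hcount : Countable X)
    (y : Y) (hy : IsMinimalOn S (orbitClosure S y)) :
    ∃ x : X, φ x = y ∧ ∃ k : ℕ, 1 ≤ k ∧ (⇑T)^[k] x = x := by
  obtain ⟨-, hCcl, hCinv, hCmin⟩ := hy
  have hKne : (φ ⁻¹' orbitClosure S y).Nonempty := by
    obtain ⟨x, rfl⟩ := hφs y
    exact ⟨x, mem_orbitClosure_self S _⟩
  have hKinv : T '' (φ ⁻¹' orbitClosure S y) ⊆ φ ⁻¹' orbitClosure S y := by
    rintro _ ⟨x, hx, rfl⟩
    rw [mem_preimage, hcomm]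
    exact hCinv ⟨φ x, hx, rfl⟩
  obtain ⟨U, hUK, hU⟩ := (hCcl.preimage hφc).exists_isMinimalOn_subset hKne hKinv
  have ⟨hUne, hUcl, hUinv, _⟩ := hU
  obtain ⟨x, hxU, hiso⟩ := hUcl.exists_nhdsWithin_eq_pure_of_countable hUne
  obtain ⟨k, hk, hper⟩ := hU.exists_isPeriodicPt hxU hiso
  have hφU : φ '' U = orbitClosure S y := by
    refine hCmin _ (image_subset_iff.2 hUK) (hUne.image φ) (hUcl.isCompact.image hφc).isClosed ?_
    rintro _ ⟨_, ⟨z, hz, rfl⟩, rfl⟩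
    exact ⟨T z, hUinv ⟨z, hz, rfl⟩, hcomm z⟩
  obtain ⟨x₀, hx₀U, hx₀⟩ := hφU ▸ mem_orbitClosure_self S y
  exact ⟨x₀, hx₀, k, hk, hU.isPeriodicPt_of_mem hxU hper hx₀U⟩
end

section
/- Let Z ⊆ {0,1}^ℤ be the shift space defined by forbidding the words 0^m 1 0^m 1 for all m > 0, and 1 0ⁿ 1 1 and 1 0ⁿ 1 0^{n+2} for all n ≥ 0. Then the configuration z = ⋯000.110100100010000⋯ (where the blocks of 0s between consecutive 1s have lengths 0, 1, 2, 3, … from left to right, with all 0s to the left) belongs to Z, and z is not ultimately periodic to the right. -/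
/-!
The `1`s of `z` sit exactly at the triangular numbers `tri k = k (k + 1) / 2`, and
`tri (k + 1) = tri k + (k + 1)`: two consecutive `1`s at distance `d` must be `tri (d - 1)`
and `tri d`. Each forbidden word pins down such a pair and then demands a letter that
contradicts the next or the previous triangular number. Since the gaps grow without bound,
no period `p` can hold beyond `tri k` with `k ≥ p`.
-/

/-- The word `p` occurs in the configuration `x` (at some position). -/
def occursIn {A : Type*} (p : List A) (x : ℤ → A) : Prop :=
  ∃ i : ℤ, ∀ j : Fin p.length, x (i + (j : ℕ)) = p.get j

/-- The forbidden words `0^m 1 0^m 1` (m > 0), `1 0^n 1 1` and `1 0^n 1 0^(n+2)` (n ≥ 0),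
with `false` playing the role of `0` and `true` of `1`. -/
def Forb : Set (List Bool) :=
  {w | ∃ m : ℕ, 0 < m ∧
      w = List.replicate m false ++ [true] ++ List.replicate m false ++ [true]} ∪
  {w | ∃ n : ℕ, w = [true] ++ List.replicate n false ++ [true, true]} ∪
  {w | ∃ n : ℕ, w = [true] ++ List.replicate n false ++ [true] ++ List.replicate (n + 2) false}

/-- The shift space defined by the forbidden words `Forb`. -/
def Zspace : Set (ℤ → Bool) := {x | ∀ w ∈ Forb, ¬ occursIn w x}

attribute [local instance] Classical.propDecidable

/-- The configuration `z = ⋯000.110100100010000⋯`: its `1`s sit exactly at the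
triangular numbers, so the gaps between consecutive `1`s are 0, 1, 2, 3, …. -/
noncomputable def zConf : ℤ → Bool := fun n =>
  if ∃ k : ℕ, n = (k * (k + 1) / 2 : ℕ) then true else false

def OccursAt {A : Type*} (w : List A) (x : ℤ → A) (i : ℤ) : Prop :=
  ∀ j : Fin w.length, x (i + (j : ℕ)) = w.get j

section OccursAt

variable {A : Type*} {x : ℤ → A} {i : ℤ}

@[simp]
lemma occursAt_nil : OccursAt ([] : List A) x i := fun j => j.elim0

@[simp]
lemma occursAt_cons (a : A) (w : List A) :
    OccursAt (a :: w) x i ↔ x i = a ∧ OccursAt w x (i + 1) := by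
  refine ⟨fun h => ⟨by simpa using h 0, fun j => ?_⟩, fun ⟨h₀, h⟩ j => ?_⟩
  · simpa [add_assoc, add_comm (1 : ℤ)] using h j.succ
  · refine Fin.cases (by simpa using h₀) (fun j => ?_) j
    simpa [add_assoc, add_comm (1 : ℤ)] using h j

@[simp]
lemma occursAt_append (u v : List A) :
    OccursAt (u ++ v) x i ↔ OccursAt u x i ∧ OccursAt v x (i + u.length) := by
  induction u generalizing i with
  | nil => simp
  | cons a u ih => simp [ih, add_assoc, add_comm (1 : ℤ), and_assoc]

@[simp]
lemma occursAt_replicate (n : ℕ) (a : A) :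
    OccursAt (List.replicate n a) x i ↔ ∀ j : ℕ, j < n → x (i + j) = a := by
  induction n generalizing i with
  | zero => simp
  | succ n ih =>
    simp only [List.replicate_succ, occursAt_cons, ih]
    constructor
    · rintro ⟨h₀, h⟩ (_ | j) hj
      · simpa using h₀
      · simpa [add_assoc, add_comm (1 : ℤ)] using h j (by omega)
    · intro h
      exact ⟨by simpa using h 0 (by omega), fun j hj => by
        simpa [add_assoc, add_comm (1 : ℤ)] using h (j + 1) (by omega)⟩

end OccursAt

def tri (k : ℕ) : ℕ := k * (k + 1) / 2

lemma tri_zero : tri 0 = 0 := rfl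

lemma tri_succ (k : ℕ) : tri (k + 1) = tri k + (k + 1) := by
  have h : (k + 1) * (k + 1 + 1) = k * (k + 1) + 2 * (k + 1) := by ring
  unfold tri; omega

lemma le_tri (k : ℕ) : k ≤ tri k := by
  induction k with
  | zero => simp [tri_zero]
  | succ k ih => rw [tri_succ]; omega

lemma tri_strictMono : StrictMono tri :=
  strictMono_nat_of_lt_succ fun k => by rw [tri_succ]; omega

lemma zConf_eq_true_iff (n : ℤ) : zConf n = true ↔ ∃ k : ℕ, n = tri k := by
  simp [zConf, tri]

lemma zConf_tri (k : ℕ) : zConf (tri k) = true := (zConf_eq_true_iff _).2 ⟨k, rfl⟩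

lemma nonneg_of_zConf_eq_true {n : ℤ} (h : zConf n = true) : 0 ≤ n := by
  obtain ⟨k, rfl⟩ := (zConf_eq_true_iff n).1 h
  positivity

lemma zConf_tri_add_of_le {a j : ℕ} (hj : 0 < j) (hja : j ≤ a) :
    zConf (tri a + j) = false := by
  by_contra h
  obtain ⟨b, hb⟩ := (zConf_eq_true_iff _).1 (Bool.not_eq_false _ ▸ h)
  have hab : a < b := tri_strictMono.lt_iff_lt.1 (by omega)
  have := tri_strictMono.monotone (Nat.succ_le_of_lt hab)
  rw [tri_succ] at this
  omega

lemma exists_tri_of_consecutive_ones {n : ℤ} {d : ℕ} (hd : 0 < d) (hn : zConf n = true)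
    (hnd : zConf (n + d) = true) (hgap : ∀ j : ℕ, 0 < j → j < d → zConf (n + j) = false) :
    ∃ a : ℕ, n = tri a ∧ d = a + 1 := by
  obtain ⟨a, rfl⟩ := (zConf_eq_true_iff n).1 hn
  refine ⟨a, rfl, le_antisymm ?_ ?_⟩
  · by_contra! h
    have := hgap (a + 1) (by omega) h
    rw [← Nat.cast_add, ← tri_succ, zConf_tri] at this
    exact Bool.noConfusion this
  · by_contra! h
    rw [zConf_tri_add_of_le hd (by omega)] at hnd
    exact Bool.noConfusion hnd

theorem zConf_mem_Zspace : zConf ∈ Zspace := by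
  rintro w ((⟨m, hm, rfl⟩ | ⟨n, rfl⟩) | ⟨n, rfl⟩) ⟨i, hocc⟩
  all_goals
    change OccursAt _ zConf i at hocc
    simp only [occursAt_append, occursAt_cons, occursAt_replicate, occursAt_nil,
      List.length_append, List.length_replicate, List.length_cons, List.length_nil,
      and_true, and_assoc, zero_add, Nat.cast_add, Nat.cast_one] at hocc
  · -- `0^m 1 0^m 1`: the `1` in the middle is `tri m`, so the previous `1` is at the start
    obtain ⟨hzeros, hone, hgap, hnext⟩ := hocc
    obtain ⟨a, ha, hma⟩ := exists_tri_of_consecutive_ones (n := i + m) (d := m + 1)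
      (by omega) hone (by convert hnext using 2; push_cast; ring) fun j hj hjm => by
        convert hgap (j - 1) (by omega) using 2; push_cast [Nat.cast_sub hj]; ring
    obtain ⟨k, rfl⟩ : ∃ k, m = k + 1 := ⟨m - 1, by omega⟩
    obtain rfl : a = k + 1 := by omega
    have hstart : i = tri k := by rw [tri_succ] at ha; push_cast at ha; omega
    simpa [hstart, zConf_tri] using hzeros 0 hm
  · -- `1 0^n 1 1`: two adjacent `1`s occur only at `tri 0`, `tri 1`, leaving no room to the left
    obtain ⟨hfirst, -, hone, hnext⟩ := hocc
    obtain ⟨a, ha, ha0⟩ := exists_tri_of_consecutive_ones (n := i + (1 + n)) (d := 1)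
      one_pos hone (by simpa using hnext) fun j hj hj1 => by omega
    obtain rfl : a = 0 := by omega
    have := nonneg_of_zConf_eq_true hfirst
    rw [tri_zero] at ha
    omega
  · -- `1 0^n 1 0^(n+2)`: the `1`s at the start and at `n + 1` are `tri n`, `tri (n + 1)`,
    -- so the next one, `tri (n + 2)`, falls into the final block of zeros
    obtain ⟨hone, hgap, hnext, hzeros⟩ := hocc
    obtain ⟨a, ha, han⟩ := exists_tri_of_consecutive_ones (n := i) (d := n + 1)
      (by omega) hone (by convert hnext using 2; push_cast; ring) fun j hj hjn => by
        convert hgap (j - 1) (by omega) using 2; push_cast [Nat.cast_sub hj]; ring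
    obtain rfl : n = a := by omega
    have := hzeros (n + 1) (by omega)
    rw [show i + (1 + n + 1) + (n + 1 : ℕ) = tri (n + 2) by
      simp only [tri_succ]; push_cast; omega, zConf_tri] at this
    exact Bool.noConfusion this

theorem zConf_not_eventually_periodic :
    ¬ ∃ p : ℤ, 0 < p ∧ ∃ N : ℤ, ∀ n : ℤ, N ≤ n → zConf (n + p) = zConf n := by
  rintro ⟨p, hp, N, hper⟩
  lift p to ℕ using hp.le
  set k := p + N.toNat
  have h := hper (tri k) (by have := le_tri k; omega)
  rw [zConf_tri, zConf_tri_add_of_le (by omega) (by omega)] at h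
  exact Bool.noConfusion h

/-- `z` belongs to the shift space and is not ultimately periodic to the right. -/
theorem stmt_9 :
    zConf ∈ Zspace ∧
      ¬ ∃ p : ℤ, 0 < p ∧ ∃ N : ℤ, ∀ n : ℤ, N ≤ n → zConf (n + p) = zConf n :=
  ⟨zConf_mem_Zspace, zConf_not_eventually_periodic⟩
end

section
/- Let φ : X → Y be a factor map between ℤ²-shift spaces (a continuous surjection commuting with both shift maps), where X ⊆ Σ^(ℤ²) is countable. If y ∈ Y satisfies σ^(0,1)(y) = y (y is vertically constant in the vertical direction), then y has a preimage x ∈ φ⁻¹(y) with σ^(0,k)(x) = x for some k ≥ 1. -/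
/-!
The fibre `X ∩ φ⁻¹{y}` is a nonempty compact countable set invariant under the vertical shift
`T = σ^(0,1)`. By Zorn it contains a minimal nonempty closed `T`-invariant set `M`. Being
countable and compact, `M` has an isolated point `a` by the Baire category theorem. The closure
of the forward orbit of `T a` is closed and invariant inside `M`, so by minimality it contains
`a`; since `a` is isolated, `a` lies on that orbit, i.e. `a` is `T`-periodic.
-/

/-- The shift by a vector `v ∈ ℤ²` on two-dimensional configurations. -/
def shift2 {A : Type*} (v : ℤ × ℤ) (x : ℤ × ℤ → A) : ℤ × ℤ → A := fun w => x (v + w)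

open Set Function

section PeriodicPoint

variable {α : Type*} [TopologicalSpace α] [T2Space α] {K : Set α}

theorem IsCompact.exists_isolated_of_countable (hK : IsCompact K) (hKc : K.Countable)
    (hne : K.Nonempty) : ∃ a ∈ K, ∃ U, IsOpen U ∧ U ∩ K = {a} := by
  have : CompactSpace K := isCompact_iff_compactSpace.1 hK
  have : Countable K := hKc.to_subtype
  have : Nonempty K := hne.to_subtype
  obtain ⟨a, b, hb⟩ := nonempty_interior_of_iUnion_of_closed (fun a : K => isClosed_singleton)
    (iUnion_of_singleton K)
  have ha : IsOpen ({a} : Set K) := by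
    rw [← interior_eq_iff_isOpen, (subset_singleton_iff_eq.1 interior_subset).resolve_left
      (nonempty_iff_ne_empty.1 ⟨b, hb⟩)]
  obtain ⟨U, hU, hUa⟩ := isOpen_induced_iff.1 ha
  refine ⟨a, a.2, U, hU, ?_⟩
  rw [inter_comm, ← Subtype.image_preimage_coe, hUa, image_singleton]

theorem IsCompact.exists_minimal_isClosed_mapsTo (hK : IsCompact K) (hne : K.Nonempty)
    {T : α → α} (hKT : MapsTo T K K) :
    ∃ M, Minimal (fun M => M ⊆ K ∧ M.Nonempty ∧ IsClosed M ∧ MapsTo T M M) M := by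
  refine (zorn_superset_nonempty {M | M ⊆ K ∧ M.Nonempty ∧ IsClosed M ∧ MapsTo T M M} ?_ K
    ⟨subset_rfl, hne, hK.isClosed, hKT⟩).imp fun _ => And.right
  rintro c hcS hchain ⟨N, hN⟩
  have : Nonempty c := ⟨⟨N, hN⟩⟩
  refine ⟨⋂₀ c, ⟨(sInter_subset_of_mem hN).trans (hcS hN).1, ?_, ?_, ?_⟩,
    fun _ => sInter_subset_of_mem⟩
  · exact IsCompact.nonempty_sInter_of_directed_nonempty_isCompact_isClosed
      (IsChain.directedOn (r := fun s t : Set α => s ⊇ t) hchain.symm) (fun M hM => (hcS hM).2.1)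
      (fun M hM => hK.of_isClosed_subset (hcS hM).2.2.1 (hcS hM).1) (fun M hM => (hcS hM).2.2.1)
  · exact isClosed_sInter fun M hM => (hcS hM).2.2.1
  · exact fun x hx M hM => (hcS hM).2.2.2 (hx M hM)

theorem IsCompact.exists_isPeriodicPt_of_countable (hK : IsCompact K) (hKc : K.Countable)
    (hne : K.Nonempty) {T : α → α} (hT : Continuous T) (hKT : MapsTo T K K) :
    ∃ a ∈ K, ∃ n, 0 < n ∧ IsPeriodicPt T n a := by
  obtain ⟨M, ⟨hMK, hMne, hMcl, hMT⟩, hMmin⟩ := hK.exists_minimal_isClosed_mapsTo hne hKT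
  obtain ⟨a, haM, U, hU, hUM⟩ := (hK.of_isClosed_subset hMcl hMK).exists_isolated_of_countable
    (hKc.mono hMK) hMne
  set orbit := range fun n => T^[n] (T a)
  have horbit : orbit ⊆ M := range_subset_iff.2 fun n => hMT.iterate n (hMT haM)
  have hclosure : closure orbit ⊆ M := hMcl.closure_subset_iff.2 horbit
  have hMclosure : M ⊆ closure orbit := hMmin
    ⟨hclosure.trans hMK, ⟨T a, subset_closure ⟨0, rfl⟩⟩, isClosed_closure,
      MapsTo.closure (fun _ ⟨n, hn⟩ => ⟨n + 1, by simp only [← hn, iterate_succ_apply']⟩) hT⟩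
    hclosure
  obtain ⟨_, hbU, n, rfl⟩ := mem_closure_iff.1 (hMclosure haM) U hU (hUM.symm.subset rfl).1
  have hperiodic : T^[n] (T a) = a := mem_singleton_iff.1 (hUM.subset ⟨hbU, horbit ⟨n, rfl⟩⟩)
  exact ⟨a, hMK haM, n + 1, n.succ_pos, by rwa [IsPeriodicPt, IsFixedPt, iterate_succ_apply]⟩

end PeriodicPoint

theorem shift2_shift2 {A : Type*} (v w : ℤ × ℤ) (x : ℤ × ℤ → A) :
    shift2 v (shift2 w x) = shift2 (w + v) x := by
  funext u
  simp only [shift2, add_assoc]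

theorem iterate_shift2 {A : Type*} (v : ℤ × ℤ) (n : ℕ) (x : ℤ × ℤ → A) :
    (shift2 v)^[n] x = shift2 (n • v) x := by
  induction n with
  | zero => funext u; simp [shift2]
  | succ n ih => rw [iterate_succ_apply', ih, shift2_shift2, succ_nsmul]

theorem continuous_shift2 {A : Type*} [TopologicalSpace A] (v : ℤ × ℤ) :
    Continuous (shift2 (A := A) v) :=
  continuous_pi fun _ => continuous_apply _

theorem stmt_12_general {A B : Type*} [TopologicalSpace A] [DiscreteTopology A] [Finite A]
    [TopologicalSpace B] [DiscreteTopology B]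
    (X : Set (ℤ × ℤ → A)) (Y : Set (ℤ × ℤ → B))
    (hXcl : IsClosed X) (hXinv : ∀ v : ℤ × ℤ, ∀ x ∈ X, shift2 v x ∈ X)
    (φ : (ℤ × ℤ → A) → (ℤ × ℤ → B)) (hφc : Continuous φ)
    (hφcomm : ∀ (v : ℤ × ℤ) (x : ℤ × ℤ → A), φ (shift2 v x) = shift2 v (φ x))
    (hφim : φ '' X = Y) (hXcount : X.Countable)
    (y : ℤ × ℤ → B) (hy : y ∈ Y) (hyv : shift2 ((0 : ℤ), (1 : ℤ)) y = y) :
    ∃ x ∈ X, φ x = y ∧ ∃ k : ℤ, 1 ≤ k ∧ shift2 (0, k) x = x := by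
  have : CompactSpace A := Finite.compactSpace
  set fibre := X ∩ φ ⁻¹' {y}
  have hcompact : IsCompact fibre := (hXcl.inter (isClosed_singleton.preimage hφc)).isCompact
  have hnonempty : fibre.Nonempty := by
    obtain ⟨x, hx, rfl⟩ := hφim.symm ▸ hy
    exact ⟨x, hx, rfl⟩
  have hinvariant : MapsTo (shift2 (0, 1)) fibre fibre := fun x ⟨hxX, hxy⟩ =>
    ⟨hXinv _ _ hxX, by rw [mem_preimage, hφcomm, hxy.out, hyv]; rfl⟩
  obtain ⟨x, ⟨hxX, hxy⟩, n, hn, hx⟩ := hcompact.exists_isPeriodicPt_of_countable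
    (hXcount.mono inter_subset_left) hnonempty (continuous_shift2 _) hinvariant
  refine ⟨x, hxX, hxy, n, by omega, ?_⟩
  simpa [IsPeriodicPt, IsFixedPt, iterate_shift2] using hx

/-- If `φ : X → Y` is a factor map of two-dimensional shift spaces with `X`
countable, then every vertically constant `y ∈ Y` has a vertically periodic
`φ`-preimage. -/
theorem stmt_12 {A B : Type*} [TopologicalSpace A] [DiscreteTopology A] [Finite A]
    [TopologicalSpace B] [DiscreteTopology B] [Finite B]
    (X : Set (ℤ × ℤ → A)) (Y : Set (ℤ × ℤ → B))
    (hXcl : IsClosed X) (hXinv : ∀ v : ℤ × ℤ, ∀ x ∈ X, shift2 v x ∈ X)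
    (hYcl : IsClosed Y) (hYinv : ∀ v : ℤ × ℤ, ∀ y ∈ Y, shift2 v y ∈ Y)
    (φ : (ℤ × ℤ → A) → (ℤ × ℤ → B)) (hφc : Continuous φ)
    (hφcomm : ∀ (v : ℤ × ℤ) (x : ℤ × ℤ → A), φ (shift2 v x) = shift2 v (φ x))
    (hφim : φ '' X = Y) (hXcount : X.Countable)
    (y : ℤ × ℤ → B) (hy : y ∈ Y) (hyv : shift2 ((0 : ℤ), (1 : ℤ)) y = y) :
    ∃ x ∈ X, φ x = y ∧ ∃ k : ℤ, 1 ≤ k ∧ shift2 (0, k) x = x :=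
  stmt_12_general X Y hXcl hXinv φ hφc hφcomm hφim hXcount y hy hyv
end

section
/- Every one-dimensional countable SFT X ⊆ Σ^ℤ has the property that each of its configurations is ultimately periodic to the left and to the right. -/
/-!
Let `L` bound the lengths of the forbidden words and let `x` lie in the shift. By pigeonhole a word
`W` of length `L` occurs in `x` at infinitely many positions `p ≥ 0`; take two of them with
`p₁ + L ≤ p₂`. Unless `x` has period `p₂ - p₁` from `p₁` on, a later occurrence `p₃` makes the
return words `a = x[p₁, p₂)` and `b = x[p₂, p₃)` satisfy `ab ≠ ba`. Both `ab` and `ba` start with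
`W`, and all windows of length `L` of `abW` and of `baW` occur in `x`; hence the same holds for
every configuration `x(-∞, p₁) B₀ B₁ B₂ ⋯` with `Bᵢ ∈ {ab, ba}`. These `2^ℵ₀` configurations all
lie in the shift, contradicting countability. The left half follows by reflecting `ℤ`.
-/

section

variable {A : Type*}

def shiftAvoiding (F : Set (List A)) : Set (ℤ → A) := {x | ∀ w ∈ F, ¬ occursIn w x}

def WindowsOccurIn (L : ℕ) (z x : ℤ → A) : Prop :=
  ∀ i : ℤ, ∃ i' : ℤ, ∀ j : ℕ, j < L → z (i + j) = x (i' + j)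

lemma mem_shiftAvoiding_of_windowsOccurIn {F : Set (List A)} {L : ℕ}
    (hL : ∀ w ∈ F, w.length ≤ L) {x z : ℤ → A} (hx : x ∈ shiftAvoiding F)
    (hzx : WindowsOccurIn L z x) : z ∈ shiftAvoiding F := by
  rintro w hw ⟨i, hi⟩
  obtain ⟨i', hi'⟩ := hzx i
  exact hx w hw ⟨i', fun j => (hi' j (j.2.trans_le (hL w hw))).symm.trans (hi j)⟩

section BlockConcat

variable {ι : Type*}

/-- `x` up to position `p`, followed by the blocks `B (α 0), B (α 1), …`, each of length `m`. -/
def blockConcat (x : ℤ → A) (p m : ℤ) (B : ι → ℤ → A) (α : ℕ → ι) (n : ℤ) : A :=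
  if n < p then x n else B (α ((n - p) / m).toNat) ((n - p) % m)

variable {x : ℤ → A} {p m : ℤ} {B : ι → ℤ → A}

lemma blockConcat_of_lt (α : ℕ → ι) {n : ℤ} (hn : n < p) : blockConcat x p m B α n = x n :=
  if_pos hn

lemma blockConcat_add (hm : 0 < m) (α : ℕ → ι) (t : ℕ) {r : ℤ} (hr₀ : 0 ≤ r) (hr : r < m) :
    blockConcat x p m B α (p + t * m + r) = B (α t) r := by
  have htm : 0 ≤ (t : ℤ) * m := by positivity
  have hsub : p + t * m + r - p = r + t * m := by ring
  rw [blockConcat, if_neg (by omega), hsub, Int.add_mul_ediv_right _ _ hm.ne',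
    Int.ediv_eq_zero_of_lt hr₀ hr, zero_add, Int.toNat_natCast, Int.add_mul_emod_self_right,
    Int.emod_eq_of_lt hr₀ hr]

lemma exists_eq_add_mul_add (hm : 0 < m) {n : ℤ} (hn : p ≤ n) :
    ∃ t : ℕ, ∃ r, 0 ≤ r ∧ r < m ∧ n = p + t * m + r := by
  refine ⟨((n - p) / m).toNat, (n - p) % m, Int.emod_nonneg _ hm.ne', Int.emod_lt_of_pos _ hm, ?_⟩
  rw [Int.toNat_of_nonneg (Int.ediv_nonneg (by omega) hm.le)]
  linarith [Int.mul_ediv_add_emod (n - p) m]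

lemma windowsOccurIn_blockConcat {L : ℕ} (hm : 0 < m) (hLm : L ≤ m)
    (hstart : ∀ c, ∀ r : ℤ, 0 ≤ r → r < L → B c r = x (p + r))
    (hend : ∀ c, ∀ r : ℤ, 0 ≤ r → r < L → B c (m + r) = x (p + r))
    (hwin : ∀ c, ∀ r : ℤ, 0 ≤ r → r < m →
      ∃ i', ∀ j : ℕ, j < L → B c (r + j) = x (i' + j))
    (α : ℕ → ι) : WindowsOccurIn L (blockConcat x p m B α) x := by
  intro i
  rcases lt_or_ge p i with hpi | hip
  · obtain ⟨t, r, hr₀, hr, rfl⟩ := exists_eq_add_mul_add hm hpi.le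
    obtain ⟨i', hi'⟩ := hwin (α t) r hr₀ hr
    refine ⟨i', fun j hj => ?_⟩
    rw [← hi' j hj]
    rcases lt_or_ge (r + j) m with hin | hout
    · rw [add_assoc, blockConcat_add hm α t (by omega) hin]
    · have hnext : p + t * m + r + j = p + (t + 1 : ℕ) * m + (r + j - m) := by push_cast; ring
      rw [hnext, blockConcat_add hm α (t + 1) (by omega) (by omega),
        hstart _ _ (by omega) (by omega), ← hend (α t) _ (by omega) (by omega), add_sub_cancel]
  · refine ⟨i, fun j hj => ?_⟩
    rcases lt_or_ge (i + j) p with hlt | hge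
    · exact blockConcat_of_lt α hlt
    · have hfirst : p + (0 : ℕ) * m + (i + j - p) = i + j := by push_cast; ring
      have h := blockConcat_add (x := x) (p := p) (B := B) hm α 0 (r := i + j - p)
        (by omega) (by omega)
      rwa [hfirst, hstart _ _ (by omega) (by omega), add_sub_cancel] at h

lemma blockConcat_injective (hm : 0 < m)
    (hB : ∀ c d, c ≠ d → ∃ r, 0 ≤ r ∧ r < m ∧ B c r ≠ B d r) :
    Function.Injective (blockConcat x p m B) := by
  intro α β hαβ
  funext t
  by_contra hne
  obtain ⟨r, hr₀, hr, hBr⟩ := hB _ _ hne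
  have h := congrFun hαβ (p + t * m + r)
  rw [blockConcat_add hm α t hr₀ hr, blockConcat_add hm β t hr₀ hr] at h
  exact hBr h

end BlockConcat

lemma uncountable_nat_to_bool : Uncountable (ℕ → Bool) := by
  rw [← Cardinal.aleph0_lt_mk_iff]
  simpa using Cardinal.cantor Cardinal.aleph0

section ReturnBlocks

variable {x : ℤ → A} {p₁ p₂ p₃ : ℤ} {L : ℕ}

/-- With `a = x[p₁, p₂)` and `b = x[p₂, p₃)`, the block `ab` for `false` and `ba` for `true`. -/
def returnBlocks (x : ℤ → A) (p₁ p₂ p₃ : ℤ) : Bool → ℤ → A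
  | false, s => x (p₁ + s)
  | true, s => if s < p₃ - p₂ then x (p₂ + s) else x (p₁ + (s - (p₃ - p₂)))

lemma returnBlocks_start (h₂₃ : p₂ + L ≤ p₃)
    (hW₂ : ∀ j : ℤ, 0 ≤ j → j < L → x (p₂ + j) = x (p₁ + j))
    (c : Bool) {s : ℤ} (hs₀ : 0 ≤ s) (hs : s < L) : returnBlocks x p₁ p₂ p₃ c s = x (p₁ + s) := by
  cases c
  · rfl
  · rw [returnBlocks, if_pos (by omega), hW₂ s hs₀ hs]

lemma returnBlocks_end (h₁₂ : p₁ ≤ p₂)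
    (hW₂ : ∀ j : ℤ, 0 ≤ j → j < L → x (p₂ + j) = x (p₁ + j))
    (hW₃ : ∀ j : ℤ, 0 ≤ j → j < L → x (p₃ + j) = x (p₁ + j))
    (c : Bool) {s : ℤ} (hs₀ : 0 ≤ s) (hs : s < L) :
    returnBlocks x p₁ p₂ p₃ c (p₃ - p₁ + s) = x (p₁ + s) := by
  cases c
  · rw [returnBlocks, ← add_assoc, add_sub_cancel, hW₃ s hs₀ hs]
  · rw [returnBlocks, if_neg (by omega), show p₁ + (p₃ - p₁ + s - (p₃ - p₂)) = p₂ + s by ring,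
      hW₂ s hs₀ hs]

lemma returnBlocks_windows (hW₃ : ∀ j : ℤ, 0 ≤ j → j < L → x (p₃ + j) = x (p₁ + j))
    (c : Bool) (s : ℤ) :
    ∃ i', ∀ j : ℕ, j < L → returnBlocks x p₁ p₂ p₃ c (s + j) = x (i' + j) := by
  cases c
  · exact ⟨p₁ + s, fun j _ => by rw [returnBlocks, add_assoc]⟩
  rcases lt_or_ge s (p₃ - p₂) with hsb | hsb
  · refine ⟨p₂ + s, fun j hj => ?_⟩
    rw [returnBlocks]
    split_ifs
    · rw [add_assoc]
    · rw [← hW₃ _ (by omega) (by omega)]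
      congr 1
      ring
  · refine ⟨p₁ + (s - (p₃ - p₂)), fun j hj => ?_⟩
    rw [returnBlocks, if_neg (by omega)]
    congr 1
    ring

lemma returnBlocks_ne {r : ℤ} (hr : r < p₃ - p₂) (hne : x (p₁ + r) ≠ x (p₂ + r)) {c d : Bool}
    (hcd : c ≠ d) : returnBlocks x p₁ p₂ p₃ c r ≠ returnBlocks x p₁ p₂ p₃ d r := by
  cases c <;> cases d <;> simp only [ne_eq, not_true_eq_false] at hcd <;>
    simpa only [returnBlocks, if_pos hr, ne_comm] using hne

end ReturnBlocks

lemma not_countable_shiftAvoiding_of_returns {F : Set (List A)} {L : ℕ}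
    (hL : ∀ w ∈ F, w.length ≤ L) {x : ℤ → A} (hx : x ∈ shiftAvoiding F) {p₁ p₂ p₃ : ℤ}
    (h₁₂ : p₁ + L ≤ p₂) (h₂₃ : p₂ + L ≤ p₃)
    (hW₂ : ∀ j : ℤ, 0 ≤ j → j < L → x (p₂ + j) = x (p₁ + j))
    (hW₃ : ∀ j : ℤ, 0 ≤ j → j < L → x (p₃ + j) = x (p₁ + j))
    {r : ℤ} (hr₀ : 0 ≤ r) (hr : r < p₃ - p₂) (hne : x (p₁ + r) ≠ x (p₂ + r)) :
    ¬ (shiftAvoiding F).Countable := by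
  have hm : 0 < p₃ - p₁ := by omega
  have hmaps : Set.MapsTo (blockConcat x p₁ (p₃ - p₁) (returnBlocks x p₁ p₂ p₃)) Set.univ
      (shiftAvoiding F) := fun α _ =>
    mem_shiftAvoiding_of_windowsOccurIn hL hx <| windowsOccurIn_blockConcat hm (by omega)
      (fun c _ => returnBlocks_start h₂₃ hW₂ c) (fun c _ => returnBlocks_end (by omega) hW₂ hW₃ c)
      (fun c s _ _ => returnBlocks_windows hW₃ c s) α
  have hinj := blockConcat_injective (x := x) (p := p₁) hm
    fun c d hcd => ⟨r, hr₀, by omega, returnBlocks_ne hr hne hcd⟩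
  exact fun hcount => @Set.not_countable_univ _ uncountable_nat_to_bool
    (hmaps.countable_of_injOn hinj.injOn hcount)

lemma exists_infinite_positions_same_window [Finite A] (x : ℤ → A) (L : ℕ) :
    ∃ T : Set ℕ, T.Infinite ∧
      ∀ s ∈ T, ∀ t ∈ T, ∀ j : ℤ, 0 ≤ j → j < L → x (s + j) = x (t + j) := by
  obtain ⟨W, hW⟩ := Finite.exists_infinite_fiber fun k : ℕ => fun j : Fin L => x (k + j)
  refine ⟨_, Set.infinite_coe_iff.mp hW, fun s hs t ht j hj₀ hj => ?_⟩
  lift j to ℕ using hj₀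
  exact congrFun (hs.trans ht.symm) ⟨j, by exact_mod_cast hj⟩

theorem eventually_periodic_of_countable [Finite A] {F : Set (List A)} (hF : F.Finite)
    (hcount : (shiftAvoiding F).Countable) {x : ℤ → A} (hx : x ∈ shiftAvoiding F) :
    ∃ p : ℤ, 0 < p ∧ ∃ N : ℤ, ∀ n : ℤ, N ≤ n → x (n + p) = x n := by
  obtain ⟨L, hL⟩ : ∃ L, ∀ w ∈ F, w.length ≤ L := (hF.image List.length).bddAbove.imp
    fun L hL w hw => hL ⟨w, hw, rfl⟩
  obtain ⟨T, hT, hsame⟩ := exists_infinite_positions_same_window x L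
  obtain ⟨p₁, hp₁⟩ := hT.nonempty
  obtain ⟨p₂, hp₂, h₁₂⟩ := hT.exists_gt (p₁ + L)
  by_contra hper
  obtain ⟨n, hn, hne⟩ : ∃ n, (p₁ : ℤ) ≤ n ∧ x (n + (p₂ - p₁)) ≠ x n := by
    by_contra! hall
    exact hper ⟨_, by omega, _, hall⟩
  obtain ⟨p₃, hp₃, h₂₃⟩ := hT.exists_gt (p₂ + L + (n - p₁).toNat)
  refine not_countable_shiftAvoiding_of_returns hL hx (p₁ := p₁) (p₂ := p₂) (p₃ := p₃)
    (by omega) (by omega) (hsame _ hp₂ _ hp₁) (hsame _ hp₃ _ hp₁) (r := n - p₁) (by omega)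
    (by omega) ?_ hcount
  rwa [add_sub_cancel, ne_comm, show (p₂ : ℤ) + (n - p₁) = n + (p₂ - p₁) by ring]

lemma occursIn_reverse_of_occursIn {w : List A} {y : ℤ → A} (h : occursIn w y) :
    occursIn w.reverse (fun n => y (-n)) := by
  obtain ⟨i, hi⟩ := h
  refine ⟨-i - (w.length - 1), fun j => ?_⟩
  have hj : (j : ℕ) < w.length := by simpa using j.2
  have hi' := hi ⟨w.length - 1 - j, by omega⟩
  show y (-(-i - (w.length - 1 : ℤ) + (j : ℕ))) = _
  rw [show -(-i - (w.length - 1 : ℤ) + (j : ℕ)) = i + ((w.length - 1 - j : ℕ) : ℤ) by omega, hi']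
  simp [List.getElem_reverse]

lemma occursIn_reverse_iff {w : List A} {y : ℤ → A} :
    occursIn w.reverse y ↔ occursIn w (fun n => y (-n)) := by
  refine ⟨fun h => by simpa using occursIn_reverse_of_occursIn h, fun h => ?_⟩
  simpa using occursIn_reverse_of_occursIn h

lemma mem_shiftAvoiding_image_reverse {F : Set (List A)} {y : ℤ → A} :
    y ∈ shiftAvoiding (List.reverse '' F) ↔ (fun n => y (-n)) ∈ shiftAvoiding F := by
  simp only [shiftAvoiding, Set.mem_ofPred_eq, Set.forall_mem_image, occursIn_reverse_iff]

end

/-- Every configuration of a countable one-dimensional SFT is ultimately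
periodic to the left and to the right. -/
theorem stmt_13 {A : Type*} [Finite A] (F : Set (List A)) (hF : F.Finite)
    (hcount : {x : ℤ → A | ∀ w ∈ F, ¬ occursIn w x}.Countable) :
    ∀ x ∈ {x : ℤ → A | ∀ w ∈ F, ¬ occursIn w x},
      (∃ p : ℤ, 0 < p ∧ ∃ N : ℤ, ∀ n : ℤ, N ≤ n → x (n + p) = x n) ∧
      (∃ p : ℤ, 0 < p ∧ ∃ N : ℤ, ∀ n : ℤ, n ≤ N → x (n - p) = x n) := by
  intro x hx
  refine ⟨eventually_periodic_of_countable hF hcount hx, ?_⟩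
  have hcount' : (shiftAvoiding (List.reverse '' F)).Countable := by
    refine (hcount.image fun (y : ℤ → A) n => y (-n)).mono fun y hy => ?_
    exact ⟨fun n => y (-n), mem_shiftAvoiding_image_reverse.1 hy, by simp⟩
  obtain ⟨p, hp, N, hN⟩ := eventually_periodic_of_countable (hF.image _) hcount'
    (x := fun n => x (-n)) (mem_shiftAvoiding_image_reverse.2 (by simp only [neg_neg]; exact hx))
  exact ⟨p, hp, -N, fun n hn => by simpa [neg_add_eq_sub] using hN (-n) (by omega)⟩
end

section
/- Let G be a finite directed graph with edge set E, let X_G ⊆ E^ℤ be its edge shift, let λ : E → Γ be a right-resolving labeling, and let x ∈ X_G with λ(x) ultimately periodic to the right with period word u (i.e., λ(x)ₙ₊|u| = λ(x)ₙ for all n ≥ N). Then x is ultimately periodic to the right with period n·|u| for some 1 ≤ n ≤ |V(G)|. -/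
/-! Along the arithmetic progression `N + k·|u|`, `k = 0, …, |V|`, two of the tail vertices of `x`
coincide by pigeonhole, say at `k = i < j`. From then on the label sequences of `x` and of `x`
shifted by `(j - i)·|u|` agree, and a right-resolving labeling determines an edge path from its
initial vertex and its label sequence, so the two paths agree as well. -/

theorem Int.apply_add_mul_eq_of_eventually_periodic {α : Type*} {f : ℤ → α} {p N : ℤ}
    (hp : 0 ≤ p) (hf : ∀ n, N ≤ n → f (n + p) = f n) (k : ℕ) {n : ℤ} (hn : N ≤ n) :
    f (n + k * p) = f n := by
  induction k with
  | zero => simp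
  | succ k ih =>
    have hstep := hf (n + k * p) (by nlinarith)
    rw [Nat.cast_succ, add_one_mul, ← add_assoc, hstep, ih]

theorem Finite.exists_lt_le_card_apply_eq {V : Type*} [Finite V] (f : ℕ → V) :
    ∃ i j, i < j ∧ j ≤ Nat.card V ∧ f i = f j := by
  have := Fintype.ofFinite V
  obtain ⟨i, j, hij, hf⟩ := Fintype.exists_ne_map_eq_of_card_lt
    (fun k : Fin (Nat.card V + 1) => f k) (by simp [Nat.card_eq_fintype_card])
  rcases lt_or_gt_of_ne (Fin.val_ne_of_ne hij) with hlt | hlt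
  · exact ⟨i, j, hlt, Nat.lt_succ_iff.mp j.isLt, hf⟩
  · exact ⟨j, i, hlt, Nat.lt_succ_iff.mp i.isLt, hf.symm⟩

theorem edgePath_eq_of_tail_eq_of_lab_eq {V E Γ : Type*} {gtail ghead : E → V} {lab : E → Γ}
    (hrr : ∀ e e' : E, gtail e = gtail e' → lab e = lab e' → e = e') {x y : ℤ → E}
    (hx : ∀ n, ghead (x n) = gtail (x (n + 1))) (hy : ∀ n, ghead (y n) = gtail (y (n + 1)))
    {a b : ℤ} (htail : gtail (x a) = gtail (y b)) (hlab : ∀ t : ℕ, lab (x (a + t)) = lab (y (b + t)))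
    (t : ℕ) : x (a + t) = y (b + t) := by
  induction t with
  | zero => simpa using hrr _ _ htail (by simpa using hlab 0)
  | succ t ih =>
    refine hrr _ _ ?_ (hlab (t + 1))
    rw [Nat.cast_succ, ← add_assoc, ← add_assoc, ← hx, ← hy, ih]

theorem stmt_14_general {V E Γ : Type*} [Finite V]
    (gtail ghead : E → V) (lab : E → Γ)
    (hrr : ∀ e e' : E, gtail e = gtail e' → lab e = lab e' → e = e')
    (x : ℤ → E) (hpath : ∀ n : ℤ, ghead (x n) = gtail (x (n + 1)))
    (u : List Γ) (N : ℤ)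
    (hper : ∀ n : ℤ, N ≤ n → lab (x (n + (u.length : ℕ))) = lab (x n)) :
    ∃ n : ℕ, 1 ≤ n ∧ n ≤ Nat.card V ∧
      ∃ N' : ℤ, ∀ m : ℤ, N' ≤ m → x (m + ((n * u.length : ℕ) : ℤ)) = x m := by
  set L : ℤ := ((u.length : ℕ) : ℤ) with hL
  have hlab : ∀ (k : ℕ) {n : ℤ}, N ≤ n → lab (x (n + k * L)) = lab (x n) :=
    Int.apply_add_mul_eq_of_eventually_periodic (f := fun n => lab (x n)) (by positivity) hper
  obtain ⟨i, j, hij, hj, htail⟩ :=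
    Finite.exists_lt_le_card_apply_eq fun k : ℕ => gtail (x (N + k * L))
  refine ⟨j - i, by omega, by omega, N + i * L, fun m hm => ?_⟩
  have hshift : N + j * L = N + i * L + ((j - i : ℕ) : ℤ) * L := by push_cast [hij.le]; ring
  have hlab_shift : ∀ s : ℕ, lab (x (N + i * L + s)) = lab (x (N + j * L + s)) := fun s => by
    have hs : N ≤ N + i * L + s := by
      have : 0 ≤ (i : ℤ) * L := by positivity
      omega
    rw [hshift, add_right_comm _ (((j - i : ℕ) : ℤ) * L), hlab (j - i) hs]
  obtain ⟨t, rfl⟩ : ∃ t : ℕ, m = N + i * L + t := ⟨(m - (N + i * L)).toNat, by omega⟩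
  rw [edgePath_eq_of_tail_eq_of_lab_eq hrr hpath hpath htail hlab_shift, hshift, Nat.cast_mul, ← hL]
  ring_nf

/-- If `x` is a bi-infinite edge path in a finite graph, `lab` is a right-resolving
labeling, and the label sequence of `x` is ultimately periodic to the right with
period `|u|`, then `x` itself is ultimately periodic to the right with period
`n·|u|` for some `1 ≤ n ≤ |V|`. -/
theorem stmt_14 {V E Γ : Type*} [Finite V] [Finite E]
    (gtail ghead : E → V) (lab : E → Γ)
    (hrr : ∀ e e' : E, gtail e = gtail e' → lab e = lab e' → e = e')
    (x : ℤ → E) (hpath : ∀ n : ℤ, ghead (x n) = gtail (x (n + 1)))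
    (u : List Γ) (hu : u ≠ []) (N : ℤ)
    (hper : ∀ n : ℤ, N ≤ n → lab (x (n + (u.length : ℕ))) = lab (x n)) :
    ∃ n : ℕ, 1 ≤ n ∧ n ≤ Nat.card V ∧
      ∃ N' : ℤ, ∀ m : ℤ, N' ≤ m → x (m + ((n * u.length : ℕ) : ℤ)) = x m :=
  stmt_14_general gtail ghead lab hrr x hpath u N hper
end
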